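/- Let a_n, B_n, b_n be positive real sequences with a_n/b_n bounded. If k_n → ∞, B_n/n → ∞, liminf_n (k_n ζ_{1,k_n}/ζ_{k_n,k_n}) > 0 and B_n ≤ M_n, then ((1/B_n − 1/M_n)·ζ_{k_n,k_n}) / ((k_n^2/n)·ζ_{1,k_n} + (1/B_n)·ζ_{k_n,k_n}) → 0 as n → ∞. -/

import Mathlib

/-!
Dividing by `ζₖ`, the ratio becomes `(1/B - 1/M) / ((k/n) r + 1/B)` with `r = k ζ₁ / ζₖ`.
Eventually `r > ε` for some `ε > 0`, and `0 ≤ 1/B - 1/M ≤ 1/B`, so the ratio lies in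
`[0, (n/B) · (1/k) / ε]`, which tends to `0` because `B/n → ∞` and `k → ∞`.
-/

open Filter Topology

lemma mul_div_sq_div_mul_add_mul_eq {p q k n ζ₁ ζₖ : ℝ} (hζₖ : ζₖ ≠ 0) :
    p * ζₖ / (k ^ 2 / n * ζ₁ + q * ζₖ) = p / (k / n * (k * ζ₁ / ζₖ) + q) := by
  rw [← mul_div_mul_right p _ hζₖ]
  congr 1
  field_simp

lemma abs_div_mul_add_le {p q c r ε : ℝ} (hc : 0 < c) (hε : 0 < ε) (hr : ε < r)
    (hp : 0 ≤ p) (hpq : p ≤ q) : |p / (c * r + q)| ≤ q / (c * ε) := by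
  have hcε : 0 < c * ε := mul_pos hc hε
  have hden : c * ε ≤ c * r + q := by linarith [mul_lt_mul_of_pos_left hr hc]
  rw [abs_of_nonneg (div_nonneg hp (by linarith))]
  exact div_le_div₀ (hp.trans hpq) hpq hcε hden

theorem monte_carlo_term_negligible_general
    (k B : ℕ → ℕ) (hkpos : ∀ n, 0 < k n) (hBpos : ∀ n, 0 < B n)
    (ζ₁ ζₖ : ℕ → ℝ) (hζ₁ : ∀ n, 0 ≤ ζ₁ n) (hζₖ : ∀ n, 0 ≤ ζₖ n)
    (hk : Tendsto (fun n => (k n : ℝ)) atTop atTop)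
    (hB : Tendsto (fun n => (B n : ℝ) / n) atTop atTop)
    (hliminf : 0 < Filter.liminf (fun n => (k n : ℝ) * ζ₁ n / ζₖ n) atTop)
    (hBM : ∀ n, B n ≤ n.choose (k n)) :
    Tendsto (fun n =>
        ((1 / (B n : ℝ) - 1 / (n.choose (k n) : ℝ)) * ζₖ n) /
          (((k n : ℝ) ^ 2 / n) * ζ₁ n + (1 / (B n : ℝ)) * ζₖ n))
      atTop (nhds 0) := by
  set ε := liminf (fun n => (k n : ℝ) * ζ₁ n / ζₖ n) atTop / 2
  have hε : 0 < ε := half_pos hliminf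
  have hratio : ∀ᶠ n in atTop, ε < (k n : ℝ) * ζ₁ n / ζₖ n :=
    eventually_lt_of_lt_liminf (half_lt_self hliminf) <| isBoundedUnder_of_eventually_ge <|
      .of_forall fun n => div_nonneg (mul_nonneg (k n).cast_nonneg (hζ₁ n)) (hζₖ n)
  have hbound : Tendsto (fun n : ℕ => 1 / (B n : ℝ) / ((k n : ℝ) / n * ε)) atTop (𝓝 0) := by
    have h := (hB.inv_tendsto_atTop.mul hk.inv_tendsto_atTop).mul_const ε⁻¹
    simp only [mul_zero, zero_mul] at h
    refine h.congr fun n => ?_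
    simp only [Pi.inv_apply]
    ring
  refine squeeze_zero_norm' ?_ hbound
  filter_upwards [hratio, eventually_gt_atTop 0] with n hr hn
  have hζₖn : ζₖ n ≠ 0 := fun h => by simp only [h, div_zero] at hr; linarith
  have hB₀ : (0 : ℝ) < B n := by exact_mod_cast hBpos n
  have hk₀ : (0 : ℝ) < k n := by exact_mod_cast hkpos n
  have hn₀ : (0 : ℝ) < n := by exact_mod_cast hn
  have hBM' : (B n : ℝ) ≤ n.choose (k n) := by exact_mod_cast hBM n
  rw [mul_div_sq_div_mul_add_mul_eq hζₖn, Real.norm_eq_abs]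
  exact abs_div_mul_add_le (by positivity) hε hr
    (sub_nonneg.2 (one_div_le_one_div_of_le hB₀ hBM')) (sub_le_self _ (by positivity))

/-- asymptotic negligibility of the Monte-Carlo variance term. If `k_n → ∞`,
`B_n/n → ∞`, `liminf (k_n ζ_{1,k_n}/ζ_{k_n,k_n}) > 0` and `B_n ≤ M_n = C(n,k_n)`, then
`((1/B_n − 1/M_n)·ζ_{k_n,k_n}) / ((k_n²/n)·ζ_{1,k_n} + (1/B_n)·ζ_{k_n,k_n}) → 0`. -/
theorem monte_carlo_term_negligible
    (a b : ℕ → ℝ) (ha : ∀ n, 0 < a n) (hb : ∀ n, 0 < b n)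
    (hab : ∃ C : ℝ, ∀ n, a n / b n ≤ C)
    (k B : ℕ → ℕ) (hkpos : ∀ n, 0 < k n) (hBpos : ∀ n, 0 < B n)
    (ζ₁ ζₖ : ℕ → ℝ) (hζ₁ : ∀ n, 0 ≤ ζ₁ n) (hζₖ : ∀ n, 0 ≤ ζₖ n)
    (hk : Tendsto (fun n => (k n : ℝ)) atTop atTop)
    (hB : Tendsto (fun n => (B n : ℝ) / n) atTop atTop)
    (hliminf : 0 < Filter.liminf (fun n => (k n : ℝ) * ζ₁ n / ζₖ n) atTop)
    (hBM : ∀ n, B n ≤ n.choose (k n)) :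
    Tendsto (fun n =>
        ((1 / (B n : ℝ) - 1 / (n.choose (k n) : ℝ)) * ζₖ n) /
          (((k n : ℝ) ^ 2 / n) * ζ₁ n + (1 / (B n : ℝ)) * ζₖ n))
      atTop (nhds 0) :=
  monte_carlo_term_negligible_general k B hkpos hBpos ζ₁ ζₖ hζ₁ hζₖ hk hB hliminf hBM
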